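/- Let G be a game with no cycle of total weight zero, let F be a set of vertices containing N = N_G such that the supΣ^N-value is finite on F, let H be the subgame obtained by removing F from G (assumed to be a subgame), let φ_H be a reducing potential for H, and let H^+ = ZP_{φ_H}. Assume there is an edge from H^+ ∩ V_Min to F, and let m be the minimal value of w(vv') + supΣ^N-value(v') − φ_H(v) over such edges. Call an edge vv' a good escape if it goes from H^+ to F and satisfies w(vv') + supΣ^N-value(v') − φ_H(v) ≤ m. Let S be the set of vertices of H^+ from which, in G, Min has a strategy ensuring that the play visits only edges of φ_H-modified weight ≤ 0 while remaining in H^+, and either stays forever in H^+ or exits via a good escape. Then for every vertex v ∈ S we have supΣ^N-value(v) = m + φ_H(v). -/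

import Mathlib

/-!
Basic definitions for mean-payoff games: games, infinite paths, positional
strategies, the valuations MP, supΣ^X and infΣ^X, values of vertices,
zones N, P, ZN, ZP (also relative to a sub-arena), reduced games,
potentials and potential reductions, traps.
-/

/-- A game: a sinkless directed graph with integer weights, whose vertices are
partitioned into Min-vertices (`IsMin`) and Max-vertices (`¬ IsMin`). -/
structure MPGame (V : Type*) where
  E : V → V → Prop
  w : V → V → ℤ
  IsMin : V → Prop
  sinkless : ∀ v, ∃ v', E v v'

namespace MPGame

variable {V : Type*}

/-- An infinite path in a game. -/
structure Path (G : MPGame V) where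
  vert : ℕ → V
  adj : ∀ i, G.E (vert i) (vert (i + 1))

/-- The sum of the weights of the first `k` edges of a path. -/
def Path.wsum {G : MPGame V} (π : G.Path) (k : ℕ) : ℤ :=
  ∑ i ∈ Finset.range k, G.w (π.vert i) (π.vert (i + 1))

/-- The tail of a path (drop the first vertex). -/
def Path.tail {G : MPGame V} (π : G.Path) : G.Path :=
  ⟨fun i => π.vert (i + 1), fun i => π.adj (i + 1)⟩

/-- A positional strategy `σ : V → V` is legal if it always follows an edge. -/
def Legal (G : MPGame V) (σ : V → V) : Prop := ∀ v, G.E v (σ v)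

/-- Consistency of a path with a positional Min-strategy. -/
def Path.ConsMin {G : MPGame V} (π : G.Path) (σ : V → V) : Prop :=
  ∀ i, G.IsMin (π.vert i) → π.vert (i + 1) = σ (π.vert i)

/-- Consistency of a path with a positional Max-strategy. -/
def Path.ConsMax {G : MPGame V} (π : G.Path) (τ : V → V) : Prop :=
  ∀ i, ¬ G.IsMin (π.vert i) → π.vert (i + 1) = τ (π.vert i)

/-- The mean-payoff valuation `MP(π) = limsup_k (1/k) ∑_{i<k} w_i`. -/
noncomputable def MP {G : MPGame V} (π : G.Path) : EReal :=
  Filter.limsup (fun k => (((π.wsum k : ℝ) / (k : ℝ)) : EReal)) Filter.atTop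

/-- `supΣ^X(π) = sup_{k ≤ n_X} ∑_{i<k} w_i`, where `n_X` is the first hitting
time of `X` (all `k` if `X` is never hit). -/
noncomputable def supSigma {G : MPGame V} (X : Set V) (π : G.Path) : EReal :=
  ⨆ k : {k : ℕ // ∀ i < k, π.vert i ∉ X}, ((π.wsum k.1 : ℝ) : EReal)

/-- `infΣ^X(π) = inf_{k ≤ n_X} ∑_{i<k} w_i`. -/
noncomputable def infSigma {G : MPGame V} (X : Set V) (π : G.Path) : EReal :=
  ⨅ k : {k : ℕ // ∀ i < k, π.vert i ∉ X}, ((π.wsum k.1 : ℝ) : EReal)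

/-- `inf_σ sup_{π ⊨ σ, π from v} val(π)`, over legal positional Min-strategies. -/
noncomputable def minVal (G : MPGame V) (val : G.Path → EReal) (v : V) : EReal :=
  ⨅ σ : {σ : V → V // G.Legal σ},
    ⨆ π : {π : G.Path // π.vert 0 = v ∧ π.ConsMin σ.1}, val π.1

/-- `sup_τ inf_{π ⊨ τ, π from v} val(π)`, over legal positional Max-strategies. -/
noncomputable def maxVal (G : MPGame V) (val : G.Path → EReal) (v : V) : EReal :=
  ⨆ τ : {τ : V → V // G.Legal τ},
    ⨅ π : {π : G.Path // π.vert 0 = v ∧ π.ConsMax τ.1}, val π.1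

/-- The MP-value of a vertex. -/
noncomputable def MPval (G : MPGame V) (v : V) : EReal := G.minVal MP v

/-- The `supΣ^X`-value of a vertex. -/
noncomputable def supSigmaVal (G : MPGame V) (X : Set V) (v : V) : EReal :=
  G.minVal (supSigma X) v

/-- The `infΣ^X`-value of a vertex. -/
noncomputable def infSigmaVal (G : MPGame V) (X : Set V) (v : V) : EReal :=
  G.minVal (infSigma X) v

/-- `G` has no cycle of total weight zero: no path repeats a vertex with the
same partial sum of weights. -/
def NoZeroCycle (G : MPGame V) : Prop :=
  ∀ (π : G.Path) (i j : ℕ), i < j → π.vert i = π.vert j → π.wsum i ≠ π.wsum j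

/-- The zone `N` of the subgame of `G` induced on `D`: vertices whose
immediately optimal edges (within `D`) have weight `< 0`. -/
def NsetOn (G : MPGame V) (D : Set V) : Set V :=
  {v | v ∈ D ∧ ((G.IsMin v ∧ ∃ v' ∈ D, G.E v v' ∧ G.w v v' < 0) ∨
      (¬ G.IsMin v ∧ ∀ v' ∈ D, G.E v v' → G.w v v' < 0))}

/-- The zone `P` of the subgame of `G` induced on `D`. -/
def PsetOn (G : MPGame V) (D : Set V) : Set V :=
  {v | v ∈ D ∧ ((¬ G.IsMin v ∧ ∃ v' ∈ D, G.E v v' ∧ 0 < G.w v v') ∨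
      (G.IsMin v ∧ ∀ v' ∈ D, G.E v v' → 0 < G.w v v'))}

/-- The zone `N` of `G`. -/
def Nset (G : MPGame V) : Set V := G.NsetOn Set.univ

/-- The zone `P` of `G`. -/
def Pset (G : MPGame V) : Set V := G.PsetOn Set.univ

/-- The zone `ZN` of the subgame of `G` induced on `D`: vertices from which
Min can force that an edge of weight `< 0` is visited before any edge of
weight `> 0` (staying within `D`). -/
inductive ZNr (G : MPGame V) (D : Set V) : V → Prop
  | minNeg (v v' : V) : v ∈ D → G.IsMin v → v' ∈ D → G.E v v' → G.w v v' < 0 →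
      ZNr G D v
  | minZero (v v' : V) : v ∈ D → G.IsMin v → v' ∈ D → G.E v v' → G.w v v' = 0 →
      ZNr G D v' → ZNr G D v
  | max (v : V) : v ∈ D → ¬ G.IsMin v →
      (∀ v' ∈ D, G.E v v' → G.w v v' ≤ 0) →
      (∀ v', v' ∈ D → G.E v v' → G.w v v' = 0 → ZNr G D v') →
      ZNr G D v

/-- The zone `ZP` of the subgame of `G` induced on `D`. -/
inductive ZPr (G : MPGame V) (D : Set V) : V → Prop
  | maxPos (v v' : V) : v ∈ D → ¬ G.IsMin v → v' ∈ D → G.E v v' → 0 < G.w v v' →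
      ZPr G D v
  | maxZero (v v' : V) : v ∈ D → ¬ G.IsMin v → v' ∈ D → G.E v v' → G.w v v' = 0 →
      ZPr G D v' → ZPr G D v
  | min (v : V) : v ∈ D → G.IsMin v →
      (∀ v' ∈ D, G.E v v' → 0 ≤ G.w v v') →
      (∀ v', v' ∈ D → G.E v v' → G.w v v' = 0 → ZPr G D v') →
      ZPr G D v

/-- The zone `ZN` of `G`. -/
def ZN (G : MPGame V) : V → Prop := G.ZNr Set.univ

/-- The zone `ZP` of `G`. -/
def ZP (G : MPGame V) : V → Prop := G.ZPr Set.univ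

/-- The subgame of `G` induced on `D` is reduced: from every vertex of `ZN`,
Min can force that the first edge visited has weight `≤ 0` and leads into
`ZN`, and symmetrically for `ZP` and Max. -/
def ReducedOn (G : MPGame V) (D : Set V) : Prop :=
  (∀ v, G.ZNr D v →
     (G.IsMin v → ∃ v' ∈ D, G.E v v' ∧ G.w v v' ≤ 0 ∧ G.ZNr D v') ∧
     (¬ G.IsMin v → ∀ v' ∈ D, G.E v v' → G.w v v' ≤ 0 ∧ G.ZNr D v')) ∧
  (∀ v, G.ZPr D v →
     (¬ G.IsMin v → ∃ v' ∈ D, G.E v v' ∧ 0 ≤ G.w v v' ∧ G.ZPr D v') ∧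
     (G.IsMin v → ∀ v' ∈ D, G.E v v' → 0 ≤ G.w v v' ∧ G.ZPr D v'))

/-- `G` is reduced. -/
def Reduced (G : MPGame V) : Prop := G.ReducedOn Set.univ

/-- The subgame of `G` induced on `D` is positively reduced: `ZN = ∅`. -/
def PosReducedOn (G : MPGame V) (D : Set V) : Prop := ∀ v, ¬ G.ZNr D v

/-- `A` is a trap for Min: a sinkless subgraph from which Min cannot escape. -/
def TrapForMin (G : MPGame V) (A : Set V) : Prop :=
  (∀ v ∈ A, ∃ v' ∈ A, G.E v v') ∧
  ∀ v ∈ A, G.IsMin v → ∀ v', G.E v v' → v' ∈ A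

/-- `A` is a trap for Max: a sinkless subgraph from which Max cannot escape. -/
def TrapForMax (G : MPGame V) (A : Set V) : Prop :=
  (∀ v ∈ A, ∃ v' ∈ A, G.E v v') ∧
  ∀ v ∈ A, ¬ G.IsMin v → ∀ v', G.E v v' → v' ∈ A

/-- The potential reduction of `G` by the potential `φ`. -/
def pot (G : MPGame V) (φ : V → ℤ) : MPGame V where
  E := G.E
  w := fun v v' => G.w v v' + φ v' - φ v
  IsMin := G.IsMin
  sinkless := G.sinkless

end MPGame

/-!
Lower bound: against any Min-strategy, Max can answer so that every edge of the play has
nonnegative `φ_H`-modified weight as long as the play stays in `ZP_{φ_H}`; this is what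
reducedness of `H_{φ_H}` provides. Without zero cycles, a play that never leaves `ZP_{φ_H}` has
unbounded sums, and a play that leaves it does so along a Min-edge into `F`, which costs at
least `m` by the choice of `m`.

Upper bound: let `R` be the set of vertices that the given strategy reaches inside `ZP_{φ_H}`.
Min plays it on `R` and a one-step optimal move elsewhere. The function `W` equal to `m + φ_H`
on `R` and to the `supΣ^N`-value off `R` satisfies `w(xy) + W(y) ≤ W(x)` along every
consistent edge leaving a vertex outside `N`, so it bounds the value once `W ≥ 0`. On `R`, this
holds because Max, taking edges of weight `≥ 0` outside `N`, forces the play out of `R` through a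
good escape: staying forever would close a cycle of weight `≥ 0` and modified weight `≤ 0`, that
is, a zero cycle.
-/

theorem Nat.forall_or_exists_forall_le_and_not_succ {P : ℕ → Prop} (h0 : P 0) :
    (∀ i, P i) ∨ ∃ K, (∀ i ≤ K, P i) ∧ ¬ P (K + 1) := by
  refine or_iff_not_imp_right.2 fun h i => ?_
  push Not at h
  induction i using Nat.strong_induction_on with
  | _ i ih =>
    cases i with
    | zero => exact h0
    | succ K => exact h K fun j hj => ih j (by omega)

namespace MPGame

variable {V : Type*} {G : MPGame V}

namespace Path

lemma wsum_zero (π : G.Path) : π.wsum 0 = 0 :=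
  Finset.sum_range_zero _

lemma wsum_succ (π : G.Path) (k : ℕ) :
    π.wsum (k + 1) = π.wsum k + G.w (π.vert k) (π.vert (k + 1)) :=
  Finset.sum_range_succ _ _

lemma wsum_nonneg {π : G.Path} {k : ℕ}
    (hw : ∀ t < k, 0 ≤ G.w (π.vert t) (π.vert (t + 1))) : 0 ≤ π.wsum k :=
  Finset.sum_nonneg fun t ht => hw t (Finset.mem_range.1 ht)

lemma wsum_nonpos {π : G.Path} {k : ℕ}
    (hw : ∀ t < k, G.w (π.vert t) (π.vert (t + 1)) ≤ 0) : π.wsum k ≤ 0 :=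
  Finset.sum_nonpos fun t ht => hw t (Finset.mem_range.1 ht)

lemma exists_vert_eq [Fintype V] (π : G.Path) (a : ℕ) :
    ∃ i j, a ≤ i ∧ i < j ∧ j ≤ a + Fintype.card V ∧ π.vert i = π.vert j := by
  obtain ⟨i, hi, j, hj, hne, heq⟩ := Finset.exists_ne_map_eq_of_card_lt_of_maps_to
    (s := Finset.Icc a (a + Fintype.card V)) (t := Finset.univ) (f := π.vert)
    (by simp; omega) (fun _ _ => Finset.mem_coe.2 (Finset.mem_univ _))
  rw [Finset.mem_Icc] at hi hj
  rcases hne.lt_or_gt with h | h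
  · exact ⟨i, j, hi.1, h, hj.2, heq⟩
  · exact ⟨j, i, hj.1, h, hi.2, heq.symm⟩

def toPot (π : G.Path) (φ : V → ℤ) : (G.pot φ).Path := ⟨π.vert, π.adj⟩

lemma wsum_toPot (π : G.Path) (φ : V → ℤ) (k : ℕ) :
    (π.toPot φ).wsum k = π.wsum k + φ (π.vert k) - φ (π.vert 0) := by
  induction k with
  | zero => simp [wsum_zero, toPot]
  | succ k ih =>
    rw [wsum_succ, wsum_succ, ih]
    simp only [toPot, pot]
    ring

def iterate (f : V → V) (hf : G.Legal f) (x : V) : G.Path where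
  vert i := f^[i] x
  adj i := by rw [Function.iterate_succ_apply']; exact hf _

lemma iterate_vert_succ (f : V → V) (hf : G.Legal f) (x : V) (i : ℕ) :
    (iterate f hf x).vert (i + 1) = f ((iterate f hf x).vert i) :=
  Function.iterate_succ_apply' f i x

lemma iterate_consMin {f σ : V → V} (hf : G.Legal f) (h : ∀ u, G.IsMin u → f u = σ u)
    (x : V) : (iterate f hf x).ConsMin σ :=
  fun i hi => (iterate_vert_succ f hf x i).trans (h _ hi)

def splice (π : G.Path) (k : ℕ) (ρ : G.Path) (h : ρ.vert 0 = π.vert k) : G.Path where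
  vert j := if j ≤ k then π.vert j else ρ.vert (j - k)
  adj j := by
    by_cases hj : j + 1 ≤ k
    · simp only [if_pos hj, if_pos (by omega : j ≤ k)]
      exact π.adj j
    · rw [if_neg hj, show j + 1 - k = j - k + 1 by omega]
      split_ifs with hjk
      · obtain rfl : j = k := by omega
        rw [Nat.sub_self, ← h]
        exact ρ.adj 0
      · exact ρ.adj (j - k)

variable {π ρ : G.Path} {k : ℕ} {h : ρ.vert 0 = π.vert k}

lemma splice_vert_of_le {j : ℕ} (hj : j ≤ k) : (π.splice k ρ h).vert j = π.vert j :=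
  if_pos hj

lemma splice_vert_add (t : ℕ) : (π.splice k ρ h).vert (k + t) = ρ.vert t := by
  change (if k + t ≤ k then _ else _) = _
  split_ifs with ht
  · obtain rfl : t = 0 := by omega
    exact h.symm
  · rw [Nat.add_sub_cancel_left]

lemma splice_consMin {σ : V → V} (hπ : π.ConsMin σ) (hρ : ρ.ConsMin σ) :
    (π.splice k ρ h).ConsMin σ := by
  intro i hi
  rcases lt_or_ge i k with hik | hik
  · rw [splice_vert_of_le hik.le] at hi ⊢
    rw [splice_vert_of_le hik]
    exact hπ i hi
  · obtain ⟨t, rfl⟩ := Nat.exists_eq_add_of_le hik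
    rw [splice_vert_add] at hi ⊢
    rw [add_assoc, splice_vert_add]
    exact hρ t hi

lemma wsum_splice (t : ℕ) : (π.splice k ρ h).wsum (k + t) = π.wsum k + ρ.wsum t := by
  induction t with
  | zero =>
    rw [add_zero, wsum_zero, add_zero]
    refine Finset.sum_congr rfl fun i hi => ?_
    rw [Finset.mem_range] at hi
    rw [splice_vert_of_le hi.le, splice_vert_of_le hi]
  | succ t ih =>
    rw [← add_assoc, wsum_succ, ih, wsum_succ, splice_vert_add,
      show k + t + 1 = k + (t + 1) from rfl, splice_vert_add]
    ring

end Path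

lemma Legal.update [DecidableEq V] {σ : V → V} (hσ : G.Legal σ) {x y : V} (hxy : G.E x y) :
    G.Legal (Function.update σ x y) := by
  intro u
  by_cases hu : u = x
  · subst hu
    rw [Function.update_self]
    exact hxy
  · rw [Function.update_of_ne hu]
    exact hσ u

lemma Path.exists_extend {σ : V → V} (hσ : G.Legal σ) {ρ : G.Path} (hρ : ρ.ConsMin σ) {t : ℕ}
    {y : V} (hy : G.E (ρ.vert t) y) (hmin : G.IsMin (ρ.vert t) → y = σ (ρ.vert t)) :
    ∃ π : G.Path, π.ConsMin σ ∧ (∀ j ≤ t, π.vert j = ρ.vert j) ∧ π.vert (t + 1) = y := by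
  classical
  let χ := iterate (Function.update σ (ρ.vert t) y) (hσ.update hy) (ρ.vert t)
  have hχ : χ.ConsMin σ := by
    refine iterate_consMin _ (fun u hu => ?_) _
    by_cases hut : u = ρ.vert t
    · subst hut
      rw [Function.update_self]
      exact hmin hu
    · exact Function.update_of_ne hut _ _
  have hχ0 : χ.vert 0 = ρ.vert t := rfl
  refine ⟨ρ.splice t χ hχ0, splice_consMin hρ hχ, fun j hj => splice_vert_of_le hj, ?_⟩
  rw [splice_vert_add 1, iterate_vert_succ]
  exact Function.update_self _ _ _

lemma exists_legal_agreeing_on_min {σ : V → V} (hσ : G.Legal σ) {Q : V → Prop}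
    {P : V → V → Prop} (h : ∀ x, ¬ G.IsMin x → Q x → ∃ y, G.E x y ∧ P x y) :
    ∃ τ, G.Legal τ ∧ (∀ x, G.IsMin x → τ x = σ x) ∧ ∀ x, ¬ G.IsMin x → Q x → P x (τ x) := by
  have : ∀ x, ∃ y, G.E x y ∧ (G.IsMin x → y = σ x) ∧ (¬ G.IsMin x → Q x → P x y) := by
    intro x
    by_cases hx : ¬ G.IsMin x ∧ Q x
    · obtain ⟨y, hy, hP⟩ := h x hx.1 hx.2
      exact ⟨y, hy, fun hm => absurd hm hx.1, fun _ _ => hP⟩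
    · exact ⟨σ x, hσ x, fun _ => rfl, fun h1 h2 => absurd ⟨h1, h2⟩ hx⟩
  choose τ hτ hτσ hτP using this
  exact ⟨τ, hτ, hτσ, hτP⟩

lemma NoZeroCycle.pot (hz : G.NoZeroCycle) (φ : V → ℤ) : (G.pot φ).NoZeroCycle := by
  intro π i j hij heq hsum
  let π' : G.Path := ⟨π.vert, π.adj⟩
  have hi : π.wsum i = π'.wsum i + φ (π.vert i) - φ (π.vert 0) := π'.wsum_toPot φ i
  have hj : π.wsum j = π'.wsum j + φ (π.vert j) - φ (π.vert 0) := π'.wsum_toPot φ j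
  rw [heq] at hi
  exact hz π' i j hij heq (by omega)

section Growth

variable [Fintype V]

/-- Between two visits of the same vertex the sum strictly grows, and some vertex repeats within
any `card V + 1` consecutive positions. -/
lemma NoZeroCycle.exists_le_wsum (hz : G.NoZeroCycle) (π : G.Path)
    (hw : ∀ i, 0 ≤ G.w (π.vert i) (π.vert (i + 1))) (n : ℤ) : ∃ k, n ≤ π.wsum k := by
  have hmono : Monotone π.wsum :=
    monotone_nat_of_le_succ fun k => by rw [Path.wsum_succ]; linarith [hw k]
  have hgain : ∀ a, π.wsum a + 1 ≤ π.wsum (a + Fintype.card V) := by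
    intro a
    obtain ⟨i, j, hai, hij, hja, heq⟩ := π.exists_vert_eq a
    have := hz π i j hij heq
    have := hmono hij.le
    have := hmono hai
    have := hmono hja
    omega
  have hlin : ∀ t : ℕ, (t : ℤ) ≤ π.wsum (t * Fintype.card V) := by
    intro t
    induction t with
    | zero => simp [Path.wsum_zero]
    | succ t ih =>
      rw [Nat.succ_mul]
      push_cast
      linarith [hgain (t * Fintype.card V)]
  exact ⟨n.toNat * Fintype.card V, (Int.self_le_toNat n).trans (hlin _)⟩

lemma NoZeroCycle.exists_le_wsum_of_pot_nonneg (hz : G.NoZeroCycle) (φ : V → ℤ) (π : G.Path)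
    (hw : ∀ i, 0 ≤ G.w (π.vert i) (π.vert (i + 1)) + φ (π.vert (i + 1)) - φ (π.vert i))
    (n : ℤ) : ∃ k, n ≤ π.wsum k := by
  have : Nonempty V := ⟨π.vert 0⟩
  obtain ⟨x₀, hx₀⟩ := Finite.exists_max φ
  obtain ⟨k, hk⟩ := (hz.pot φ).exists_le_wsum (π.toPot φ) hw (n + φ x₀ - φ (π.vert 0))
  rw [Path.wsum_toPot] at hk
  exact ⟨k, by linarith [hx₀ (π.vert k)]⟩

lemma NoZeroCycle.exists_pot_pos (hz : G.NoZeroCycle) (φ : V → ℤ) (π : G.Path)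
    (hw : ∀ i, 0 ≤ G.w (π.vert i) (π.vert (i + 1))) :
    ∃ i, 0 < G.w (π.vert i) (π.vert (i + 1)) + φ (π.vert (i + 1)) - φ (π.vert i) := by
  by_contra! hneg
  have : Nonempty V := ⟨π.vert 0⟩
  obtain ⟨x₀, hx₀⟩ := Finite.exists_min φ
  obtain ⟨k, hk⟩ := hz.exists_le_wsum π hw (φ (π.vert 0) - φ x₀ + 1)
  have hpot := (π.toPot φ).wsum_nonpos (k := k) fun t _ => hneg t
  rw [Path.wsum_toPot] at hpot
  linarith [hx₀ (π.vert k)]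

end Growth

noncomputable def supSigmaValOf (G : MPGame V) (X : Set V) (σ : V → V) (x : V) : EReal :=
  ⨆ π : {π : G.Path // π.vert 0 = x ∧ π.ConsMin σ}, supSigma X π.1

section Values

variable {X : Set V} {σ : V → V} {x y : V}

lemma wsum_le_supSigma {π : G.Path} {k : ℕ} (hk : ∀ i < k, π.vert i ∉ X) :
    ((π.wsum k : ℝ) : EReal) ≤ supSigma X π :=
  le_iSup (fun k : {k : ℕ // ∀ i < k, π.vert i ∉ X} => ((π.wsum k.1 : ℝ) : EReal)) ⟨k, hk⟩

lemma supSigma_le {π : G.Path} {c : EReal}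
    (h : ∀ k, (∀ i < k, π.vert i ∉ X) → ((π.wsum k : ℝ) : EReal) ≤ c) : supSigma X π ≤ c :=
  iSup_le fun k => h k.1 k.2

lemma supSigma_nonneg (X : Set V) (π : G.Path) : 0 ≤ supSigma X π := by
  simpa [Path.wsum_zero] using wsum_le_supSigma (X := X) (π := π) (k := 0) (by simp)

lemma supSigma_le_supSigmaValOf {π : G.Path} (h0 : π.vert 0 = x) (hc : π.ConsMin σ) :
    supSigma X π ≤ G.supSigmaValOf X σ x :=
  le_iSup (fun π : {π : G.Path // π.vert 0 = x ∧ π.ConsMin σ} => supSigma X π.1) ⟨π, h0, hc⟩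

lemma supSigmaValOf_le {c : EReal}
    (h : ∀ π : G.Path, π.vert 0 = x → π.ConsMin σ → supSigma X π ≤ c) :
    G.supSigmaValOf X σ x ≤ c :=
  iSup_le fun π => h π.1 π.2.1 π.2.2

lemma supSigmaVal_le_supSigmaValOf (hσ : G.Legal σ) (x : V) :
    G.supSigmaVal X x ≤ G.supSigmaValOf X σ x :=
  iInf_le (fun σ : {σ : V → V // G.Legal σ} => G.supSigmaValOf X σ.1 x) ⟨σ, hσ⟩

lemma le_supSigmaVal {c : EReal} (h : ∀ σ, G.Legal σ → c ≤ G.supSigmaValOf X σ x) :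
    c ≤ G.supSigmaVal X x :=
  le_iInf fun σ => h σ.1 σ.2

lemma supSigmaVal_nonneg (X : Set V) (x : V) : 0 ≤ G.supSigmaVal X x :=
  le_supSigmaVal fun σ hσ => (supSigma_nonneg X _).trans
    (supSigma_le_supSigmaValOf (π := Path.iterate σ hσ x) rfl
      (Path.iterate_consMin hσ (fun _ _ => rfl) x))

lemma _root_.EReal.coe_add_iSup_le {ι : Sort*} {c : ℝ} {f : ι → EReal} {a : EReal}
    (h : ∀ i, (c : EReal) + f i ≤ a) : (c : EReal) + ⨆ i, f i ≤ a := by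
  have key : ∀ e : EReal, (c : EReal) + e ≤ a ↔ e ≤ a - c := fun e => by
    rw [add_comm, EReal.le_sub_iff_add_le (by simp) (by simp)]
  exact (key _).2 (iSup_le fun i => (key _).1 (h i))

lemma wsum_add_supSigmaValOf_le {π : G.Path} (h0 : π.vert 0 = x) (hc : π.ConsMin σ) {k : ℕ}
    (hk : ∀ i < k, π.vert i ∉ X) :
    ((π.wsum k : ℝ) : EReal) + G.supSigmaValOf X σ (π.vert k) ≤ G.supSigmaValOf X σ x := by
  refine EReal.coe_add_iSup_le fun ⟨ρ, hρ0, hρc⟩ => ?_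
  have hsp0 : (π.splice k ρ hρ0).vert 0 = x := (Path.splice_vert_of_le (Nat.zero_le k)).trans h0
  refine le_trans ?_ (supSigma_le_supSigmaValOf hsp0 (Path.splice_consMin hc hρc))
  refine EReal.coe_add_iSup_le fun ⟨t, ht⟩ => ?_
  have hsum : ((π.wsum k : ℝ) : EReal) + ((ρ.wsum t : ℝ) : EReal) =
      (((π.splice k ρ hρ0).wsum (k + t) : ℝ) : EReal) := by
    rw [Path.wsum_splice]; push_cast; rfl
  rw [hsum]
  refine wsum_le_supSigma fun i hi => ?_
  rcases lt_or_ge i k with hik | hik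
  · rw [Path.splice_vert_of_le hik.le]
    exact hk i hik
  · obtain ⟨s, rfl⟩ := Nat.exists_eq_add_of_le hik
    rw [Path.splice_vert_add]
    exact ht s (by omega)

lemma w_add_supSigmaValOf_le (hσ : G.Legal σ) (hx : x ∉ X) (hxy : G.E x y)
    (hmin : G.IsMin x → y = σ x) :
    ((G.w x y : ℝ) : EReal) + G.supSigmaValOf X σ y ≤ G.supSigmaValOf X σ x := by
  obtain ⟨π, hπc, hπx, hπy⟩ := Path.exists_extend hσ
    (Path.iterate_consMin hσ (fun _ _ => rfl) x) (t := 0) hxy hmin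
  have h0 : π.vert 0 = x := hπx 0 le_rfl
  have := wsum_add_supSigmaValOf_le (X := X) h0 hπc (k := 1)
    fun i hi => by rwa [show i = 0 by omega, h0]
  rwa [Path.wsum_succ, Path.wsum_zero, zero_add, h0, hπy] at this

lemma w_add_supSigmaVal_le_of_not_isMin (hx : x ∉ X) (hmax : ¬ G.IsMin x) (hxy : G.E x y) :
    ((G.w x y : ℝ) : EReal) + G.supSigmaVal X y ≤ G.supSigmaVal X x :=
  le_supSigmaVal fun _ hσ => (add_le_add_right (supSigmaVal_le_supSigmaValOf hσ y) _).trans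
    (w_add_supSigmaValOf_le hσ hx hxy (absurd · hmax))

lemma exists_legal_w_add_supSigmaVal_le [Finite V] (X : Set V) :
    ∃ τ, G.Legal τ ∧ ∀ x ∉ X,
      ((G.w x (τ x) : ℝ) : EReal) + G.supSigmaVal X (τ x) ≤ G.supSigmaVal X x := by
  have : ∀ x, ∃ y, G.E x y ∧ ∀ y', G.E x y' →
      ((G.w x y : ℝ) : EReal) + G.supSigmaVal X y ≤ ((G.w x y' : ℝ) : EReal) + G.supSigmaVal X y' :=
    fun x => Set.exists_min_image {y | G.E x y} _ (Set.toFinite _) (G.sinkless x)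
  choose τ hτ hτmin using this
  refine ⟨τ, hτ, fun x hx => le_supSigmaVal fun σ hσ => ?_⟩
  calc _ ≤ ((G.w x (σ x) : ℝ) : EReal) + G.supSigmaVal X (σ x) := hτmin x (σ x) (hσ x)
    _ ≤ ((G.w x (σ x) : ℝ) : EReal) + G.supSigmaValOf X σ (σ x) := by
      gcongr
      exact supSigmaVal_le_supSigmaValOf hσ _
    _ ≤ _ := w_add_supSigmaValOf_le hσ hx (hσ x) fun _ => rfl

lemma supSigmaValOf_le_of_step {W : V → EReal} (hW0 : ∀ x, 0 ≤ W x)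
    (hstep : ∀ x y, x ∉ X → G.E x y → (G.IsMin x → y = σ x) →
      ((G.w x y : ℝ) : EReal) + W y ≤ W x) (x : V) :
    G.supSigmaValOf X σ x ≤ W x := by
  refine supSigmaValOf_le fun π h0 hc => supSigma_le fun k hk => ?_
  suffices ((π.wsum k : ℝ) : EReal) + W (π.vert k) ≤ W x from
    (le_add_of_nonneg_right (hW0 _)).trans this
  induction k with
  | zero => simp [Path.wsum_zero, h0]
  | succ k ih =>
    calc ((π.wsum (k + 1) : ℝ) : EReal) + W (π.vert (k + 1))
        = ((π.wsum k : ℝ) : EReal) +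
            (((G.w (π.vert k) (π.vert (k + 1)) : ℝ) : EReal) + W (π.vert (k + 1))) := by
          rw [Path.wsum_succ]; push_cast; rw [add_assoc]
      _ ≤ ((π.wsum k : ℝ) : EReal) + W (π.vert k) := by
          gcongr
          exact hstep _ _ (hk k (by omega)) (π.adj k) (hc k)
      _ ≤ W x := ih fun i hi => hk i (by omega)

end Values

def reachWithin (G : MPGame V) (σ : V → V) (P : V → Prop) (v : V) : Set V :=
  {x | ∃ π : G.Path, π.vert 0 = v ∧ π.ConsMin σ ∧ ∃ t, (∀ j ≤ t, P (π.vert j)) ∧ π.vert t = x}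

section reachWithin

variable {σ : V → V} {P : V → Prop} {v x y : V}

lemma self_mem_reachWithin (hσ : G.Legal σ) (hv : P v) : v ∈ G.reachWithin σ P v :=
  ⟨Path.iterate σ hσ v, rfl, Path.iterate_consMin hσ (fun _ _ => rfl) v, 0,
    fun j hj => by rwa [Nat.le_zero.1 hj], rfl⟩

lemma prop_of_mem_reachWithin (hx : x ∈ G.reachWithin σ P v) : P x := by
  obtain ⟨π, -, -, t, hP, rfl⟩ := hx
  exact hP t le_rfl

lemma exists_path_of_mem_reachWithin (hσ : G.Legal σ) (hx : x ∈ G.reachWithin σ P v)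
    (hxy : G.E x y) (hmin : G.IsMin x → y = σ x) :
    ∃ π : G.Path, π.vert 0 = v ∧ π.ConsMin σ ∧
      ∃ t, (∀ j ≤ t, P (π.vert j)) ∧ π.vert t = x ∧ π.vert (t + 1) = y := by
  obtain ⟨ρ, hρ0, hρc, t, hP, rfl⟩ := hx
  obtain ⟨π, hπc, hπρ, hπy⟩ := Path.exists_extend hσ hρc hxy hmin
  exact ⟨π, (hπρ 0 (Nat.zero_le t)).trans hρ0, hπc, t, fun j hj => hπρ j hj ▸ hP j hj,
    hπρ t le_rfl, hπy⟩

lemma mem_reachWithin_of_edge (hσ : G.Legal σ) (hx : x ∈ G.reachWithin σ P v)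
    (hxy : G.E x y) (hmin : G.IsMin x → y = σ x) (hy : P y) : y ∈ G.reachWithin σ P v := by
  obtain ⟨π, h0, hc, t, hP, -, hπy⟩ := exists_path_of_mem_reachWithin hσ hx hxy hmin
  refine ⟨π, h0, hc, t + 1, fun j hj => ?_, hπy⟩
  rcases Nat.lt_or_eq_of_le hj with hj | rfl
  · exact hP j (by omega)
  · rwa [hπy]

end reachWithin

def ClosedUpToGoodEscapes (G : MPGame V) (σ : V → V) (F : Set V) (φ g : V → ℤ) (m : ℤ)
    (R : Set V) : Prop :=
  ∀ x ∈ R, ∀ y, G.E x y → (G.IsMin x → y = σ x) →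
    (y ∈ R ∧ G.w x y + φ y - φ x ≤ 0) ∨ (y ∈ F ∧ G.w x y + g y - φ x ≤ m)

section Zones

variable {F : Set V} {φ g : V → ℤ} {m : ℤ} {σ : V → V}

lemma w_nonneg_of_notMem_Nset {x y : V} (hx : x ∉ G.Nset) (hmin : G.IsMin x) (hxy : G.E x y) :
    0 ≤ G.w x y := by
  by_contra! h
  exact hx ⟨trivial, Or.inl ⟨hmin, y, trivial, hxy, h⟩⟩

lemma exists_w_nonneg_of_notMem_Nset {x : V} (hx : x ∉ G.Nset) (hmax : ¬ G.IsMin x) :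
    ∃ y, G.E x y ∧ 0 ≤ G.w x y := by
  by_contra! h
  exact hx ⟨trivial, Or.inr ⟨hmax, fun y _ hxy => h y hxy⟩⟩

lemma ZPr.mem {D : Set V} {x : V} (h : G.ZPr D x) : x ∈ D := by
  cases h <;> assumption

lemma exists_ZPr_response (hred : (G.pot φ).ReducedOn Fᶜ) (hσ : G.Legal σ) :
    ∃ τ, G.Legal τ ∧ (∀ x, G.IsMin x → τ x = σ x) ∧
      ∀ x y, (G.pot φ).ZPr Fᶜ x → G.E x y → (¬ G.IsMin x → y = τ x) →
        ((G.pot φ).ZPr Fᶜ y ∧ 0 ≤ G.w x y + φ y - φ x) ∨ (G.IsMin x ∧ y ∈ F) := by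
  obtain ⟨τ, hτ, hτσ, hτZ⟩ := exists_legal_agreeing_on_min hσ (Q := (G.pot φ).ZPr Fᶜ)
    (P := fun x y => (G.pot φ).ZPr Fᶜ y ∧ 0 ≤ G.w x y + φ y - φ x) fun x hmax hx => by
      obtain ⟨y, -, hxy, hw, hy⟩ := (hred.2 x hx).1 hmax
      exact ⟨y, hxy, hy, hw⟩
  refine ⟨τ, hτ, hτσ, fun x y hx hxy hy => ?_⟩
  by_cases hmin : G.IsMin x
  · by_cases hyF : y ∈ F
    · exact Or.inr ⟨hmin, hyF⟩
    · obtain ⟨hw, hyZ⟩ := (hred.2 x hx).2 hmin y hyF hxy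
      exact Or.inl ⟨hyZ, hw⟩
  · rw [hy hmin]
    exact Or.inl (hτZ x hmin hx)

lemma le_supSigmaVal_of_ZPr [Fintype V] (hz : G.NoZeroCycle) {X : Set V} (hXF : X ⊆ F)
    (hg : ∀ u ∈ F, ((g u : ℝ) : EReal) ≤ G.supSigmaVal X u)
    (hred : (G.pot φ).ReducedOn Fᶜ)
    (hm : ∀ u u', (G.pot φ).ZPr Fᶜ u → G.IsMin u → G.E u u' → u' ∈ F →
      m ≤ G.w u u' + g u' - φ u)
    {z : V} (hzZ : (G.pot φ).ZPr Fᶜ z) :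
    (((m + φ z : ℤ) : ℝ) : EReal) ≤ G.supSigmaVal X z := by
  refine le_supSigmaVal fun σ hσ => ?_
  obtain ⟨τ, hτ, hτσ, hτstep⟩ := exists_ZPr_response hred hσ
  set π := Path.iterate τ hτ z
  have hπc : π.ConsMin σ := Path.iterate_consMin hτ hτσ z
  have hπ0 : π.vert 0 = z := rfl
  have hstep i (hi : (G.pot φ).ZPr Fᶜ (π.vert i)) :=
    hτstep _ _ hi (π.adj i) fun _ => Path.iterate_vert_succ τ hτ z i
  have hnotX i (hi : (G.pot φ).ZPr Fᶜ (π.vert i)) : π.vert i ∉ X := fun hX => hi.mem (hXF hX)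
  have hpot i (hi : (G.pot φ).ZPr Fᶜ (π.vert i)) (hi' : (G.pot φ).ZPr Fᶜ (π.vert (i + 1))) :
      0 ≤ G.w (π.vert i) (π.vert (i + 1)) + φ (π.vert (i + 1)) - φ (π.vert i) :=
    (hstep i hi).elim And.right fun h => absurd h.2 hi'.mem
  rcases Nat.forall_or_exists_forall_le_and_not_succ (P := fun i => (G.pot φ).ZPr Fᶜ (π.vert i))
    hzZ with hall | ⟨K, hin, hout⟩
  · obtain ⟨k, hk⟩ := hz.exists_le_wsum_of_pot_nonneg φ π
      (fun i => hpot i (hall i) (hall (i + 1))) (m + φ z)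
    calc (((m + φ z : ℤ) : ℝ) : EReal) ≤ ((π.wsum k : ℝ) : EReal) := by exact_mod_cast hk
      _ ≤ supSigma X π := wsum_le_supSigma fun i _ => hnotX i (hall i)
      _ ≤ _ := supSigma_le_supSigmaValOf hπ0 hπc
  · obtain ⟨hmin, hF⟩ := (hstep K (hin K le_rfl)).resolve_left fun h => hout h.1
    have hprefix := (π.toPot φ).wsum_nonneg fun t ht => hpot t (hin t ht.le) (hin (t + 1) ht)
    rw [Path.wsum_toPot, hπ0] at hprefix
    have hexit := hm _ _ (hin K le_rfl) hmin (π.adj K) hF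
    calc (((m + φ z : ℤ) : ℝ) : EReal)
        ≤ ((π.wsum (K + 1) : ℝ) : EReal) + ((g (π.vert (K + 1)) : ℝ) : EReal) := by
          rw [Path.wsum_succ]
          exact_mod_cast (by linarith : m + φ z ≤
            π.wsum K + G.w (π.vert K) (π.vert (K + 1)) + g (π.vert (K + 1)))
      _ ≤ ((π.wsum (K + 1) : ℝ) : EReal) + G.supSigmaValOf X σ (π.vert (K + 1)) := by
          gcongr
          exact (hg _ hF).trans (supSigmaVal_le_supSigmaValOf hσ _)
      _ ≤ _ := wsum_add_supSigmaValOf_le hπ0 hπc fun i hi => hnotX i (hin i (by omega))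

lemma nonneg_of_closedUpToGoodEscapes [Fintype V] (hz : G.NoZeroCycle) (hNF : G.Nset ⊆ F)
    (hg0 : ∀ u ∈ F, 0 ≤ g u) (hσ : G.Legal σ) {R : Set V} (hRF : ∀ x ∈ R, x ∉ F)
    (hR : G.ClosedUpToGoodEscapes σ F φ g m R)
    {x : V} (hx : x ∈ R) : 0 ≤ m + φ x := by
  obtain ⟨τ, hτ, hτσ, hτw⟩ := exists_legal_agreeing_on_min hσ (Q := (· ∉ G.Nset))
    (P := fun x y => 0 ≤ G.w x y) fun _ hmax hN => exists_w_nonneg_of_notMem_Nset hN hmax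
  set π := Path.iterate τ hτ x
  have hπc : π.ConsMin σ := Path.iterate_consMin hτ hτσ x
  have hπ0 : π.vert 0 = x := rfl
  have hw i (hi : π.vert i ∈ R) : 0 ≤ G.w (π.vert i) (π.vert (i + 1)) := by
    have hN : π.vert i ∉ G.Nset := fun h => hRF _ hi (hNF h)
    by_cases hmin : G.IsMin (π.vert i)
    · exact w_nonneg_of_notMem_Nset hN hmin (π.adj i)
    · rw [Path.iterate_vert_succ]
      exact hτw _ hmin hN
  have hstep i (hi : π.vert i ∈ R) := hR _ hi _ (π.adj i) (hπc i)
  have hstay i (hi : π.vert i ∈ R) (hi' : π.vert (i + 1) ∈ R) :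
      G.w (π.vert i) (π.vert (i + 1)) + φ (π.vert (i + 1)) - φ (π.vert i) ≤ 0 :=
    (hstep i hi).elim And.right fun h => absurd h.1 (hRF _ hi')
  rcases Nat.forall_or_exists_forall_le_and_not_succ (P := fun i => π.vert i ∈ R) hx with
    hall | ⟨K, hin, hout⟩
  · obtain ⟨i, hi⟩ := hz.exists_pot_pos φ π fun i => hw i (hall i)
    linarith [hstay i (hall i) (hall (i + 1))]
  · obtain ⟨hF, hgood⟩ := (hstep K (hin K le_rfl)).resolve_left fun h => hout h.1
    have hraw : 0 ≤ π.wsum K := π.wsum_nonneg fun t ht => hw t (hin t ht.le)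
    have hpot := (π.toPot φ).wsum_nonpos fun t ht => hstay t (hin t ht.le) (hin (t + 1) ht)
    rw [Path.wsum_toPot, hπ0] at hpot
    linarith [hw K (hin K le_rfl), hg0 _ hF]

lemma closedUpToGoodEscapes_reachWithin (hσ : G.Legal σ) {v : V}
    (hens : ∀ π : G.Path, π.vert 0 = v → π.ConsMin σ →
      ∀ i, (∀ j ≤ i, (G.pot φ).ZPr Fᶜ (π.vert j)) →
        (((G.pot φ).ZPr Fᶜ (π.vert (i + 1)) ∧
            G.w (π.vert i) (π.vert (i + 1)) + φ (π.vert (i + 1)) - φ (π.vert i) ≤ 0) ∨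
         (π.vert (i + 1) ∈ F ∧
            G.w (π.vert i) (π.vert (i + 1)) + g (π.vert (i + 1)) - φ (π.vert i) ≤ m))) :
    G.ClosedUpToGoodEscapes σ F φ g m (G.reachWithin σ ((G.pot φ).ZPr Fᶜ) v) := by
  intro x hx y hxy hmin
  obtain ⟨π, h0, hc, t, hP, hπx, hπy⟩ := exists_path_of_mem_reachWithin hσ hx hxy hmin
  have hstep := hens π h0 hc t hP
  rw [hπx, hπy] at hstep
  exact hstep.imp_left fun ⟨hy, hw⟩ => ⟨mem_reachWithin_of_edge hσ hx hxy hmin hy, hw⟩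

lemma supSigmaVal_le_of_closedUpToGoodEscapes [Finite V] {X : Set V}
    (hg : ∀ u ∈ F, G.supSigmaVal X u ≤ ((g u : ℝ) : EReal)) (hσ : G.Legal σ)
    {R : Set V} (hRF : ∀ x ∈ R, x ∉ F)
    (hR : G.ClosedUpToGoodEscapes σ F φ g m R)
    (hlow : ∀ x ∈ R, (((m + φ x : ℤ) : ℝ) : EReal) ≤ G.supSigmaVal X x)
    (hnonneg : ∀ x ∈ R, 0 ≤ m + φ x) {x : V} (hx : x ∈ R) :
    G.supSigmaVal X x ≤ (((m + φ x : ℤ) : ℝ) : EReal) := by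
  classical
  obtain ⟨τ, hτ, hτval⟩ := exists_legal_w_add_supSigmaVal_le (G := G) X
  let W : V → EReal := R.piecewise (fun x => (((m + φ x : ℤ) : ℝ) : EReal)) (G.supSigmaVal X)
  have hW0 x : 0 ≤ W x := by
    by_cases hx : x ∈ R
    · simp only [W, Set.piecewise_eq_of_mem _ _ _ hx]
      exact_mod_cast hnonneg x hx
    · simp only [W, Set.piecewise_eq_of_notMem _ _ _ hx]
      exact supSigmaVal_nonneg X x
  have hWle x : W x ≤ G.supSigmaVal X x := by
    by_cases hx : x ∈ R
    · simp only [W, Set.piecewise_eq_of_mem _ _ _ hx]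
      exact hlow x hx
    · simp only [W, Set.piecewise_eq_of_notMem _ _ _ hx, le_rfl]
  have hstep x y (hxX : x ∉ X) (hxy : G.E x y) (hmin : G.IsMin x → y = R.piecewise σ τ x) :
      ((G.w x y : ℝ) : EReal) + W y ≤ W x := by
    by_cases hxR : x ∈ R
    · rw [Set.piecewise_eq_of_mem _ _ _ hxR] at hmin
      simp only [W, Set.piecewise_eq_of_mem _ _ _ hxR]
      rcases hR x hxR y hxy hmin with ⟨hyR, hw⟩ | ⟨hyF, hw⟩
      · simp only [Set.piecewise_eq_of_mem _ _ _ hyR]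
        exact_mod_cast (by linarith : G.w x y + (m + φ y) ≤ m + φ x)
      · simp only [Set.piecewise_eq_of_notMem _ _ _ fun h => hRF y h hyF]
        calc _ ≤ ((G.w x y : ℝ) : EReal) + ((g y : ℝ) : EReal) := by gcongr; exact hg y hyF
          _ ≤ _ := by exact_mod_cast (by linarith : G.w x y + g y ≤ m + φ x)
    · rw [Set.piecewise_eq_of_notMem _ _ _ hxR] at hmin
      simp only [W, Set.piecewise_eq_of_notMem _ _ _ hxR]
      calc _ ≤ ((G.w x y : ℝ) : EReal) + G.supSigmaVal X y := by gcongr; exact hWle y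
        _ ≤ _ := by
          by_cases hxmin : G.IsMin x
          · rw [hmin hxmin]
            exact hτval x hxX
          · exact w_add_supSigmaVal_le_of_not_isMin hxX hxmin hxy
  have hlegal : G.Legal (R.piecewise σ τ) := fun u => by
    by_cases hu : u ∈ R
    · rw [Set.piecewise_eq_of_mem _ _ _ hu]; exact hσ u
    · rw [Set.piecewise_eq_of_notMem _ _ _ hu]; exact hτ u
  calc G.supSigmaVal X x ≤ G.supSigmaValOf X (R.piecewise σ τ) x :=
        supSigmaVal_le_supSigmaValOf hlegal x
    _ ≤ W x := supSigmaValOf_le_of_step hW0 hstep x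
    _ = _ := Set.piecewise_eq_of_mem _ _ _ hx

end Zones

end MPGame

open MPGame in
theorem statement15_general {V : Type*} [Fintype V] (G : MPGame V)
    (hz : G.NoZeroCycle)
    (F : Set V) (hNF : G.Nset ⊆ F)
    (g : V → ℤ) (hg : ∀ u ∈ F, G.supSigmaVal G.Nset u = ((g u : ℝ) : EReal))
    (φH : V → ℤ) (hred : (G.pot φH).ReducedOn Fᶜ)
    (m : ℤ)
    (hmlb : ∀ u u', (G.pot φH).ZPr Fᶜ u → G.IsMin u → G.E u u' → u' ∈ F →
      m ≤ G.w u u' + g u' - φH u)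
    (v : V) (hv : (G.pot φH).ZPr Fᶜ v)
    (σ : V → V) (hσ : G.Legal σ)
    (hens : ∀ π : G.Path, π.vert 0 = v → π.ConsMin σ →
      ∀ i, (∀ j ≤ i, (G.pot φH).ZPr Fᶜ (π.vert j)) →
        (((G.pot φH).ZPr Fᶜ (π.vert (i + 1)) ∧
            G.w (π.vert i) (π.vert (i + 1)) +
              φH (π.vert (i + 1)) - φH (π.vert i) ≤ 0) ∨
         (π.vert (i + 1) ∈ F ∧
            G.w (π.vert i) (π.vert (i + 1)) +
              g (π.vert (i + 1)) - φH (π.vert i) ≤ m))) :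
    G.supSigmaVal G.Nset v = ((m + φH v : ℝ) : EReal) := by
  set R := G.reachWithin σ ((G.pot φH).ZPr Fᶜ) v
  have hRF : ∀ x ∈ R, x ∉ F := fun x hx => (prop_of_mem_reachWithin hx).mem
  have hR : G.ClosedUpToGoodEscapes σ F φH g m R := closedUpToGoodEscapes_reachWithin hσ hens
  have hlow : ∀ x ∈ R, (((m + φH x : ℤ) : ℝ) : EReal) ≤ G.supSigmaVal G.Nset x :=
    fun x hx => le_supSigmaVal_of_ZPr hz hNF (fun u hu => (hg u hu).ge) hred hmlb
      (prop_of_mem_reachWithin hx)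
  have hg0 : ∀ u ∈ F, 0 ≤ g u := fun u hu => by
    exact_mod_cast (hg u hu) ▸ G.supSigmaVal_nonneg G.Nset u
  have hvR : v ∈ R := self_mem_reachWithin hσ hv
  have hupper := supSigmaVal_le_of_closedUpToGoodEscapes (fun u hu => (hg u hu).le) hσ hRF hR hlow
    (fun x hx => nonneg_of_closedUpToGoodEscapes hz hNF hg0 hσ hRF hR hx) hvR
  exact_mod_cast le_antisymm hupper (hlow v hvR)

open MPGame in
/-- extension of Lemma 3a, fixing many vertices at once:
with `F ⊇ N`, `g` the finite `supΣ^N`-values on `F`, `H = G ∖ F` a subgame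
with reducing potential `φ_H`, `H⁺ = ZP_{φ_H}`, and `m` the minimum of
`w(vv') + supΣ^N(v') − φ_H(v)` over edges from `H⁺ ∩ V_Min` to `F`: if a
vertex `v ∈ H⁺` is such that Min has a strategy ensuring, from `v`, that
the play visits only edges of `φ_H`-modified weight `≤ 0` while remaining in
`H⁺` and either stays forever in `H⁺` or exits via a good escape (an edge
from `H⁺` to `F` of value `≤ m`), then `supΣ^N(v) = m + φ_H(v)`. -/
theorem statement15 {V : Type*} [Fintype V] (G : MPGame V)
    (hz : G.NoZeroCycle)
    (F : Set V) (hNF : G.Nset ⊆ F)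
    (g : V → ℤ) (hg : ∀ u ∈ F, G.supSigmaVal G.Nset u = ((g u : ℝ) : EReal))
    (hsub : ∀ u ∈ Fᶜ, ∃ u' ∈ Fᶜ, G.E u u')
    (φH : V → ℤ) (hred : (G.pot φH).ReducedOn Fᶜ)
    (m : ℤ)
    (hmex : ∃ u u', (G.pot φH).ZPr Fᶜ u ∧ G.IsMin u ∧ G.E u u' ∧ u' ∈ F ∧
      G.w u u' + g u' - φH u = m)
    (hmlb : ∀ u u', (G.pot φH).ZPr Fᶜ u → G.IsMin u → G.E u u' → u' ∈ F →
      m ≤ G.w u u' + g u' - φH u)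
    (v : V) (hv : (G.pot φH).ZPr Fᶜ v)
    (σ : V → V) (hσ : G.Legal σ)
    (hens : ∀ π : G.Path, π.vert 0 = v → π.ConsMin σ →
      ∀ i, (∀ j ≤ i, (G.pot φH).ZPr Fᶜ (π.vert j)) →
        (((G.pot φH).ZPr Fᶜ (π.vert (i + 1)) ∧
            G.w (π.vert i) (π.vert (i + 1)) +
              φH (π.vert (i + 1)) - φH (π.vert i) ≤ 0) ∨
         (π.vert (i + 1) ∈ F ∧
            G.w (π.vert i) (π.vert (i + 1)) +
              g (π.vert (i + 1)) - φH (π.vert i) ≤ m))) :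
    G.supSigmaVal G.Nset v = ((m + φH v : ℝ) : EReal) :=
  statement15_general G hz F hNF g hg φH hred m hmlb v hv σ hσ hens
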